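/- arXiv:1603.05730 — 3 statements merged into one kernel-verified Lean document; each statement's English description precedes it below -/
import Mathlib

section
/- Let (λ_j)_{j≥1} be a nondecreasing sequence of positive reals and (φ_j) an orthonormal basis of L²(Ω). For u in the form domain, define Q_s(u) = Σ_j λ_j^s (∫_Ω u φ_j)². Let (u_h) be a sequence with u_h → u in L²(Ω), and suppose for each h there are eigendata (λ_j^h, φ_j^h) with λ_j^h → λ_j and φ_j^h → φ_j in L²(Ω) for every j, and the corresponding quadratic forms Q_s^h(u_h) = Σ_j (λ_j^h)^s (∫ u_h φ_j^h)² are uniformly bounded. Then Q_s(u) ≤ liminf_h Q_s^h(u_h). -/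
open Filter MeasureTheory Topology

/-- Spectral-series core of Lemma 2.2: lower semicontinuity of the quadratic
forms `Q_s` along a sequence with converging eigendata. -/
theorem stmt5 {α : Type*} [MeasurableSpace α] {μ : Measure α}
    (s : ℝ) (hs : s ∈ Set.Ioo (0:ℝ) 1)
    (lam : ℕ → ℝ) (hlam_pos : ∀ j, 0 < lam j) (hlam_mono : Monotone lam)
    (φ : ℕ → Lp ℝ 2 μ) (hφ : Orthonormal ℝ φ)
    (lamh : ℕ → ℕ → ℝ) (φh : ℕ → ℕ → Lp ℝ 2 μ)
    (hφh : ∀ h, Orthonormal ℝ (φh h))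
    (hlamh : ∀ j, Tendsto (fun h => lamh h j) atTop (nhds (lam j)))
    (hφh_conv : ∀ j, Tendsto (fun h => φh h j) atTop (nhds (φ j)))
    (u : Lp ℝ 2 μ) (uh : ℕ → Lp ℝ 2 μ)
    (hu : Tendsto uh atTop (nhds u))
    (C : ℝ)
    (hbound : ∀ h, (∑' j, ENNReal.ofReal ((lamh h j) ^ s * (inner ℝ (uh h) (φh h j) : ℝ) ^ 2))
      ≤ ENNReal.ofReal C) :
    (∑' j, ENNReal.ofReal ((lam j) ^ s * (inner ℝ u (φ j) : ℝ) ^ 2)) ≤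
      Filter.liminf
        (fun h => ∑' j, ENNReal.ofReal ((lamh h j) ^ s * (inner ℝ (uh h) (φh h j) : ℝ) ^ 2))
        atTop := by
  have key : ∀ j, Tendsto (fun h => ENNReal.ofReal ((lamh h j) ^ s * (inner ℝ (uh h) (φh h j) : ℝ) ^ 2))
      atTop (nhds (ENNReal.ofReal ((lam j) ^ s * (inner ℝ u (φ j) : ℝ) ^ 2))) := by
    intro j
    apply ENNReal.tendsto_ofReal
    have h1 : Tendsto (fun h => (lamh h j) ^ s) atTop (nhds ((lam j) ^ s)) :=
      (hlamh j).rpow_const (Or.inl (hlam_pos j).ne')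
    have h2 : Tendsto (fun h => (inner ℝ (uh h) (φh h j) : ℝ)) atTop
        (nhds (inner ℝ u (φ j) : ℝ)) := hu.inner (hφh_conv j)
    exact h1.mul (h2.pow 2)
  calc (∑' j, ENNReal.ofReal ((lam j) ^ s * (inner ℝ u (φ j) : ℝ) ^ 2))
      = ∫⁻ j, ENNReal.ofReal ((lam j) ^ s * (inner ℝ u (φ j) : ℝ) ^ 2) ∂Measure.count := by
        rw [MeasureTheory.lintegral_count]
    _ = ∫⁻ j, Filter.liminf (fun h => ENNReal.ofReal ((lamh h j) ^ s * (inner ℝ (uh h) (φh h j) : ℝ) ^ 2)) atTop ∂Measure.count := by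
        congr 1; funext j; exact ((key j).liminf_eq).symm
    _ ≤ Filter.liminf (fun h => ∫⁻ j, ENNReal.ofReal ((lamh h j) ^ s * (inner ℝ (uh h) (φh h j) : ℝ) ^ 2) ∂Measure.count) atTop :=
        lintegral_liminf_le (fun h => measurable_of_countable _)
    _ = Filter.liminf (fun h => ∑' j, ENNReal.ofReal ((lamh h j) ^ s * (inner ℝ (uh h) (φh h j) : ℝ) ^ 2)) atTop := by
        simp_rw [MeasureTheory.lintegral_count]
end

section
/- Let H be a Hilbert space, a a continuous symmetric coercive bilinear form on H, f ∈ H', and let ψ_h → ψ uniformly (in L^∞), with the nonempty closed convex sets K_h = {v ≥ ψ_h} and K = {v ≥ ψ} all containing a common element v₀. If u_h solves the variational inequality on K_h, then u_h → u strongly in H, where u solves the variational inequality on K. -/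
open Filter Topology

/-- Theorem 4.3 in abstract form: if the obstacles `ψ_h` converge to `ψ`
uniformly (encoded by `ψ − δ_h·1 ≤ ψ_h ≤ ψ + δ_h·1` with `δ_h → 0`) and all the
convex sets contain a common element `v₀`, then the solutions `u_h` of the
obstacle problems converge strongly to the solution `u` of the limit problem. -/
theorem stmt11 {H : Type*} [NormedAddCommGroup H] [InnerProductSpace ℝ H] [CompleteSpace H]
    [Lattice H] [CovariantClass H H (· + ·) (· ≤ ·)]
    (hclosed : IsClosed {v : H | 0 ≤ v})
    (a : LinearMap.BilinForm ℝ H)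
    (hsymm : ∀ v w, a v w = a w v)
    (hcont : ∃ C : ℝ, ∀ v w, |a v w| ≤ C * ‖v‖ * ‖w‖)
    (hcoer : ∃ c > (0:ℝ), ∀ v, c * ‖v‖ ^ 2 ≤ a v v)
    (f : H →L[ℝ] ℝ)
    (one : H) (ψ : H) (ψh : ℕ → H) (δ : ℕ → ℝ)
    (hδ0 : ∀ h, 0 ≤ δ h) (hδ : Tendsto δ atTop (nhds 0))
    (hψh : ∀ h, ψ - δ h • one ≤ ψh h ∧ ψh h ≤ ψ + δ h • one)
    (v₀ : H) (hv₀ : ∀ h, ψh h ≤ v₀) (hv₀' : ψ ≤ v₀)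
    (uh : ℕ → H)
    (huh : ∀ h, ψh h ≤ uh h ∧ ∀ v, ψh h ≤ v → f (v - uh h) ≤ a (uh h) (v - uh h))
    (u : H) (hu : ψ ≤ u) (hVI : ∀ v, ψ ≤ v → f (v - u) ≤ a u (v - u)) :
    Tendsto uh atTop (nhds u) := by
  obtain ⟨C, hC⟩ := hcont
  obtain ⟨c, hc, hcoer⟩ := hcoer
  set C' := max C 0 with hC'def
  have hC'0 : 0 ≤ C' := le_max_right _ _
  have hC' : ∀ v w, |a v w| ≤ C' * ‖v‖ * ‖w‖ := fun v w => (hC v w).trans <| by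
    gcongr
    exact le_max_left _ _
  have hfb : ∀ x : H, |f x| ≤ ‖f‖ * ‖x‖ := fun x => by
    rw [← Real.norm_eq_abs]; exact f.le_opNorm x
  set A := C' * ‖v₀‖ + ‖f‖ with hA
  set B0 := ‖f‖ * ‖v₀‖ with hB0
  have hA0 : 0 ≤ A := by positivity
  have hB00 : 0 ≤ B0 := by positivity
  set M := max 1 ((A + B0) / c) with hM
  have hM1 : (1:ℝ) ≤ M := le_max_left _ _
  have hM0 : 0 ≤ M := zero_le_one.trans hM1
  -- boundedness of uh
  have hbound : ∀ h, ‖uh h‖ ≤ M := by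
    intro h
    set x := ‖uh h‖ with hx
    have hx0 : 0 ≤ x := norm_nonneg _
    have h1 : f (v₀ - uh h) ≤ a (uh h) (v₀ - uh h) := (huh h).2 v₀ (hv₀ h)
    have e1 : a (uh h) (v₀ - uh h) = a (uh h) v₀ - a (uh h) (uh h) := by
      simp [map_sub]
    have h2 : |a (uh h) v₀| ≤ C' * x * ‖v₀‖ := hC' _ _
    have h3 : |f (v₀ - uh h)| ≤ ‖f‖ * ‖v₀ - uh h‖ := hfb _
    have h4 : ‖v₀ - uh h‖ ≤ ‖v₀‖ + x := norm_sub_le _ _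
    have h5 : c * x ^ 2 ≤ a (uh h) (uh h) := hcoer _
    have hfn : 0 ≤ ‖f‖ := norm_nonneg _
    have hkey : c * x ^ 2 ≤ A * x + B0 := by
      have := abs_le.1 h2
      have := abs_le.1 h3
      nlinarith
    rcases le_or_gt x 1 with hx1 | hx1
    · exact hx1.trans hM1
    · have : c * x ≤ A + B0 := by nlinarith
      have : x ≤ (A + B0) / c := by
        rw [le_div_iff₀ hc]; linarith [mul_comm c x ▸ this]
      exact this.trans (le_max_right _ _)
  -- the key estimate
  set B := C' * M * ‖one‖ + C' * ‖u‖ * ‖one‖ + 2 * (‖f‖ * ‖one‖) with hB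
  have hBnn : 0 ≤ B := by positivity
  have hkey : ∀ h, ‖uh h - u‖ ≤ Real.sqrt (δ h * B / c) := by
    intro h
    have hv1 : ψh h ≤ u + δ h • one :=
      (hψh h).2.trans (add_le_add_left hu _)
    have hv2 : ψ ≤ uh h + δ h • one :=
      sub_le_iff_le_add.mp ((hψh h).1.trans (huh h).1)
    have h1 := (huh h).2 (u + δ h • one) hv1
    have h2 := hVI (uh h + δ h • one) hv2
    simp only [map_add, map_sub, map_smul, smul_eq_mul, add_sub_assoc] at h1 h2
    have hsym := hsymm u (uh h)
    have hexp : a (uh h - u) (uh h - u) =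
        a (uh h) (uh h) - a (uh h) u - a u (uh h) + a u u := by
      simp only [map_sub, LinearMap.sub_apply]; ring
    have hstep : a (uh h - u) (uh h - u) ≤
        δ h * (a (uh h) one + a u one - 2 * f one) := by
      rw [hexp]; linarith
    have hb1 : |a (uh h) one| ≤ C' * M * ‖one‖ := by
      have := hC' (uh h) one
      have h2' : C' * ‖uh h‖ * ‖one‖ ≤ C' * M * ‖one‖ := by
        gcongr
        exact hbound h
      exact this.trans h2'
    have hb2 : |a u one| ≤ C' * ‖u‖ * ‖one‖ := hC' _ _
    have hb3 : |f one| ≤ ‖f‖ * ‖one‖ := hfb _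
    have hδh := hδ0 h
    have hfin : c * ‖uh h - u‖ ^ 2 ≤ δ h * B := by
      have := hcoer (uh h - u)
      have := abs_le.1 hb1
      have := abs_le.1 hb2
      have := abs_le.1 hb3
      nlinarith
    have hsq : ‖uh h - u‖ ^ 2 ≤ δ h * B / c := by
      rw [le_div_iff₀ hc]; linarith [mul_comm c (‖uh h - u‖ ^ 2) ▸ hfin]
    calc ‖uh h - u‖ = Real.sqrt (‖uh h - u‖ ^ 2) := by
          rw [Real.sqrt_sq (norm_nonneg _)]
      _ ≤ Real.sqrt (δ h * B / c) := Real.sqrt_le_sqrt hsq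
  have hlim : Tendsto (fun h => Real.sqrt (δ h * B / c)) atTop (𝓝 0) := by
    have h1 : Tendsto (fun h => δ h * B / c) atTop (𝓝 0) := by
      simpa [mul_div_assoc] using hδ.mul_const (B / c)
    have h2 := h1.sqrt
    rwa [Real.sqrt_zero] at h2
  have := squeeze_zero (fun h => norm_nonneg (uh h - u)) hkey hlim
  exact tendsto_iff_norm_sub_tendsto_zero.mpr this
end

section
/- Let H be a Hilbert space, a a continuous symmetric coercive bilinear form, and for each h let ψ_h, f_h be data with ψ_h → ψ in H (so that ψ_h⁺-shifted competitors converge) and f_h → f in H'. Suppose K_h = {v ∈ H | v ≥ ψ_h a.e.} are nonempty and the lattice operations v ↦ v ∨ ψ_h are continuous in h in the sense that v ∨ ψ_h → v ∨ ψ in H for each fixed v. If u_h solves the variational inequality over K_h with datum f_h, then u_h → u strongly in H, where u solves the limiting variational inequality over K = {v ≥ ψ}. -/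
open Filter Topology

lemma aux_quad12 {x b m : ℝ} (hx : 0 ≤ x) (hb : 0 ≤ b) (hm : 0 ≤ m)
    (h : x ^ 2 ≤ b * x + m) : x ≤ b + Real.sqrt m := by
  by_contra hcon
  push_neg at hcon
  have hs := Real.sq_sqrt hm
  have hsn := Real.sqrt_nonneg m
  nlinarith [sq_nonneg (x - b - Real.sqrt m)]

/-- Theorem 4.4 in abstract form: continuous dependence of the solution of the
obstacle problem on obstacles `ψ_h → ψ` in `H` and data `f_h → f` in `H'`. -/
theorem stmt12 {H : Type*} [NormedAddCommGroup H] [InnerProductSpace ℝ H] [CompleteSpace H]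
    [Lattice H] [CovariantClass H H (· + ·) (· ≤ ·)]
    (hclosed : IsClosed {v : H | 0 ≤ v})
    (a : LinearMap.BilinForm ℝ H)
    (hsymm : ∀ v w, a v w = a w v)
    (hcont : ∃ C : ℝ, ∀ v w, |a v w| ≤ C * ‖v‖ * ‖w‖)
    (hcoer : ∃ c > (0:ℝ), ∀ v, c * ‖v‖ ^ 2 ≤ a v v)
    (ψ : H) (ψh : ℕ → H) (hψ : Tendsto ψh atTop (nhds ψ))
    (f : H →L[ℝ] ℝ) (fh : ℕ → H →L[ℝ] ℝ) (hf : Tendsto fh atTop (nhds f))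
    (hlat : ∀ v : H, Tendsto (fun h => v ⊔ ψh h) atTop (nhds (v ⊔ ψ)))
    (uh : ℕ → H)
    (huh : ∀ h, ψh h ≤ uh h ∧ ∀ v, ψh h ≤ v → fh h (v - uh h) ≤ a (uh h) (v - uh h))
    (u : H) (hu : ψ ≤ u) (hVI : ∀ v, ψ ≤ v → f (v - u) ≤ a u (v - u)) :
    Tendsto uh atTop (nhds u) := by
  obtain ⟨C0, hC0⟩ := hcont
  obtain ⟨c, hc, hco⟩ := hcoer
  set C : ℝ := max C0 0 with hCdef
  have hCnn : 0 ≤ C := le_max_right _ _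
  have hC : ∀ v w, |a v w| ≤ C * ‖v‖ * ‖w‖ := fun v w =>
    (hC0 v w).trans (by
      have : (0:ℝ) ≤ ‖v‖ * ‖w‖ := mul_nonneg (norm_nonneg _) (norm_nonneg _)
      nlinarith [le_max_left C0 (0:ℝ)])
  -- the two correction terms
  set d : ℕ → H := fun h => u ⊔ ψh h - u with hddef
  set e : ℕ → H := fun h => ψ ⊔ ψh h - ψh h with hedef
  have hd0 : Tendsto d atTop (𝓝 0) := by
    have := (hlat u).sub_const u
    rwa [sup_eq_left.mpr hu, sub_self] at this
  have he0 : Tendsto e atTop (𝓝 0) := by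
    have := (hlat ψ).sub hψ
    rwa [sup_idem, sub_self] at this
  have hdn : Tendsto (fun h => ‖d h‖) atTop (𝓝 0) := by
    simpa using hd0.norm
  have hen : Tendsto (fun h => ‖e h‖) atTop (𝓝 0) := by
    simpa using he0.norm
  have hfn : Tendsto (fun h => ‖fh h - f‖) atTop (𝓝 0) := by
    rw [tendsto_iff_norm_sub_tendsto_zero] at hf
    exact hf
  have hfb : Tendsto (fun h => ‖fh h‖) atTop (𝓝 ‖f‖) := hf.norm
  -- the key quantitative bound
  set g : ℕ → ℝ := fun h =>
    (‖fh h - f‖ + C * ‖d h‖) / c +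
      Real.sqrt ((‖fh h‖ * ‖d h‖ + ‖f‖ * ‖e h‖ + C * ‖u‖ * (‖d h‖ + ‖e h‖)) / c) with hgdef
  have key : ∀ h, ‖uh h - u‖ ≤ g h := by
    intro h
    set w := uh h with hw
    set p := u ⊔ ψh h with hp
    set q := ψ ⊔ ψh h with hq
    have h1 := (huh h).2 p le_sup_right
    have hψe : ψ ≤ w + e h := by
      have h2 : ψ ≤ q := le_sup_left
      have h3 : q = e h + ψh h := by simp [hedef, hq]
      have h4 : e h + ψh h ≤ e h + w := add_le_add_right (huh h).1 _
      calc ψ ≤ e h + ψh h := h3 ▸ h2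
        _ ≤ e h + w := h4
        _ = w + e h := add_comm _ _
    have h2 := hVI (w + e h) hψe
    -- the main estimate
    have main : a (w - u) (w - u) ≤
        (fh h - f) (w - u) + a (w - u) (d h) +
          (a u (d h) + a u (e h) - fh h (d h) - f (e h)) := by
      simp only [hddef, hedef, ContinuousLinearMap.sub_apply, map_sub, map_add,
        LinearMap.sub_apply, LinearMap.add_apply] at h1 h2 ⊢
      linarith
    have coer := hco (w - u)
    have b1 : (fh h - f) (w - u) ≤ ‖fh h - f‖ * ‖w - u‖ := by
      have := (fh h - f).le_opNorm (w - u)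
      rw [Real.norm_eq_abs] at this
      linarith [le_abs_self ((fh h - f) (w - u))]
    have b2 : a (w - u) (d h) ≤ C * ‖w - u‖ * ‖d h‖ :=
      (le_abs_self _).trans (hC _ _)
    have b3 : -(fh h (d h)) ≤ ‖fh h‖ * ‖d h‖ := by
      have := (fh h).le_opNorm (d h)
      rw [Real.norm_eq_abs] at this
      linarith [neg_abs_le (fh h (d h))]
    have b4 : -(f (e h)) ≤ ‖f‖ * ‖e h‖ := by
      have := f.le_opNorm (e h)
      rw [Real.norm_eq_abs] at this
      linarith [neg_abs_le (f (e h))]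
    have b5 : a u (d h) ≤ C * ‖u‖ * ‖d h‖ := (le_abs_self _).trans (hC _ _)
    have b6 : a u (e h) ≤ C * ‖u‖ * ‖e h‖ := (le_abs_self _).trans (hC _ _)
    have quad : c * ‖w - u‖ ^ 2 ≤
        (‖fh h - f‖ + C * ‖d h‖) * ‖w - u‖ +
          (‖fh h‖ * ‖d h‖ + ‖f‖ * ‖e h‖ + C * ‖u‖ * (‖d h‖ + ‖e h‖)) := by
      nlinarith
    have hMnn : 0 ≤ ‖fh h‖ * ‖d h‖ + ‖f‖ * ‖e h‖ + C * ‖u‖ * (‖d h‖ + ‖e h‖) := by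
      positivity
    have hbnn : 0 ≤ ‖fh h - f‖ + C * ‖d h‖ := by positivity
    have := aux_quad12 (x := ‖w - u‖)
      (b := (‖fh h - f‖ + C * ‖d h‖) / c)
      (m := (‖fh h‖ * ‖d h‖ + ‖f‖ * ‖e h‖ + C * ‖u‖ * (‖d h‖ + ‖e h‖)) / c)
      (norm_nonneg _) (div_nonneg hbnn hc.le) (div_nonneg hMnn hc.le)
      (by rw [div_mul_eq_mul_div, ← add_div, le_div_iff₀ hc]; nlinarith)
    simpa [hgdef] using this
  have hg0 : Tendsto g atTop (𝓝 0) := by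
    have t1 : Tendsto (fun h => (‖fh h - f‖ + C * ‖d h‖) / c) atTop (𝓝 0) := by
      have := (hfn.add ((tendsto_const_nhds (x := C)).mul hdn)).div_const c
      simpa using this
    have t2 : Tendsto (fun h =>
        (‖fh h‖ * ‖d h‖ + ‖f‖ * ‖e h‖ + C * ‖u‖ * (‖d h‖ + ‖e h‖)) / c) atTop (𝓝 0) := by
      have := (((hfb.mul hdn).add ((tendsto_const_nhds (x := ‖f‖)).mul hen)).add
        ((tendsto_const_nhds (x := C * ‖u‖)).mul (hdn.add hen))).div_const c
      simpa using this
    have t3 : Tendsto (fun h =>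
        Real.sqrt ((‖fh h‖ * ‖d h‖ + ‖f‖ * ‖e h‖ + C * ‖u‖ * (‖d h‖ + ‖e h‖)) / c))
        atTop (𝓝 0) := by
      have := (Real.continuous_sqrt.tendsto 0).comp t2
      simpa [Function.comp_def] using this
    simpa using t1.add t3
  rw [tendsto_iff_norm_sub_tendsto_zero]
  exact squeeze_zero (fun h => norm_nonneg _) key hg0
end
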